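/- arXiv:0712.0953 — 11 statements merged into one kernel-verified Lean document; each statement's English description precedes it below -/
import Mathlib

section
/- A k-distance set in the d-dimensional space ℝ^d with the sup-norm ‖·‖_∞ has cardinality at most (k+1)^d. -/
/-- The set of distances realized "below `x`" in coordinate `i` within `S`. -/
def kDistAux (S : Set (Fin d → ℝ)) (i : Fin d) (x : Fin d → ℝ) : Set ℝ :=
  {r : ℝ | 0 < r ∧ ∃ z ∈ S, dist x z = r ∧ x i - z i = r}

lemma kDistAux_subset (S : Set (Fin d → ℝ)) (i : Fin d) (x : Fin d → ℝ) (hx : x ∈ S) :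
    kDistAux S i x ⊆ {r : ℝ | ∃ a ∈ S, ∃ b ∈ S, a ≠ b ∧ dist a b = r} := by
  rintro r ⟨hr, z, hz, hdz, -⟩
  refine ⟨x, hx, z, hz, fun hxz => ?_, hdz⟩
  subst hxz
  rw [dist_self] at hdz
  linarith

lemma kDistAux_lt (S : Set (Fin d → ℝ)) (i : Fin d) (x y : Fin d → ℝ)
    (hx : x ∈ S) (hy : y ∈ S)
    (hfin : (kDistAux S i x).Finite) (hfiny : (kDistAux S i y).Finite)
    (hc : 0 < dist x y) (hco : x i - y i = dist x y) :
    (kDistAux S i y).ncard < (kDistAux S i x).ncard := by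
  set c := dist x y with hcdef
  have hsub : insert c ((fun r => r + c) '' kDistAux S i y) ⊆ kDistAux S i x := by
    rintro r (rfl | ⟨s, ⟨hs, z, hz, hdz, hcz⟩, rfl⟩)
    · exact ⟨hc, y, hy, rfl, hco⟩
    · dsimp only
      refine ⟨by linarith, z, hz, ?_, by linarith⟩
      have h1 : dist x z ≤ c + s := by
        calc dist x z ≤ dist x y + dist y z := dist_triangle x y z
        _ = c + s := by rw [hdz]
      have h2 : s + c ≤ dist x z := by
        have := dist_le_pi_dist x z i
        rw [Real.dist_eq] at this
        have habs : x i - z i ≤ |x i - z i| := le_abs_self _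
        linarith
      linarith
  have himg : ((fun r => r + c) '' kDistAux S i y).ncard = (kDistAux S i y).ncard :=
    Set.ncard_image_of_injective _ (add_left_injective c)
  have hnotmem : c ∉ (fun r => r + c) '' kDistAux S i y := by
    rintro ⟨s, ⟨hs, -⟩, heq⟩
    dsimp only at heq
    linarith
  have hcard : (insert c ((fun r => r + c) '' kDistAux S i y)).ncard
      = (kDistAux S i y).ncard + 1 := by
    rw [Set.ncard_insert_of_notMem hnotmem (hfiny.image _), himg]
  have := Set.ncard_le_ncard hsub hfin
  omega

/-- A `k`-distance set in `ℝ^d` with the sup-norm (the default norm on `Fin d → ℝ`)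
has cardinality at most `(k+1)^d`. -/
theorem kDistanceSet_sup_norm_card_le (d k : ℕ) (S : Set (Fin d → ℝ))
    (hk : {r : ℝ | ∃ x ∈ S, ∃ y ∈ S, x ≠ y ∧ dist x y = r}.encard = k) :
    S.encard ≤ ((k + 1) ^ d : ℕ) := by
  set D := {r : ℝ | ∃ x ∈ S, ∃ y ∈ S, x ≠ y ∧ dist x y = r} with hD
  have hDfin : D.Finite := by
    rw [← Set.encard_ne_top_iff, hk]
    exact ENat.coe_ne_top k
  have hDcard : D.ncard = k := by
    rw [Set.ncard_def, hk]; rfl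
  have hTfin : ∀ (i : Fin d) (x : Fin d → ℝ), x ∈ S → (kDistAux S i x).Finite :=
    fun i x hx => hDfin.subset (kDistAux_subset S i x hx)
  have hTle : ∀ (i : Fin d) (x : Fin d → ℝ), x ∈ S → (kDistAux S i x).ncard ≤ k := by
    intro i x hx
    rw [← hDcard]
    exact Set.ncard_le_ncard (kDistAux_subset S i x hx) hDfin
  classical
  set φ : (Fin d → ℝ) → (Fin d → Fin (k + 1)) := fun x i =>
    ⟨min (kDistAux S i x).ncard k, Nat.lt_succ_of_le (min_le_right _ _)⟩ with hφ
  have hinj : Set.InjOn φ S := by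
    intro x hx y hy hxy
    by_contra hne
    have hpos : 0 < dist x y := dist_pos.mpr hne
    -- find a coordinate realizing the distance
    have hd : (Finset.univ : Finset (Fin d)).Nonempty := by
      rw [Finset.univ_nonempty_iff]
      by_contra hne2
      simp only [not_nonempty_iff] at hne2
      exact hne (Subsingleton.elim x y)
    obtain ⟨i, -, hi⟩ := Finset.exists_mem_eq_sup Finset.univ hd (fun j => nndist (x j) (y j))
    have hicoord : dist x y = |x i - y i| := by
      rw [← Real.dist_eq, dist_pi_def, hi]; rfl
    have hval : (kDistAux S i x).ncard = (kDistAux S i y).ncard := by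
      have := congrFun hxy i
      rw [hφ] at this
      simp only [Fin.mk.injEq] at this
      rw [min_eq_left (hTle i x hx), min_eq_left (hTle i y hy)] at this
      exact this
    rcases abs_cases (x i - y i) with ⟨habs, -⟩ | ⟨habs, -⟩
    · have := kDistAux_lt S i x y hx hy (hTfin i x hx) (hTfin i y hy) hpos
        (by rw [hicoord, habs])
      omega
    · have := kDistAux_lt S i y x hy hx (hTfin i y hy) (hTfin i x hx)
        (by rwa [dist_comm]) (by rw [dist_comm, hicoord, habs]; ring)
      omega
  calc S.encard = (φ '' S).encard := (Set.InjOn.encard_image hinj).symm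
    _ ≤ (Set.univ : Set (Fin d → Fin (k + 1))).encard := Set.encard_le_encard (Set.subset_univ _)
    _ = ((k + 1) ^ d : ℕ) := by
      rw [Set.encard_univ]
      simp [ENat.card_eq_coe_fintype_card]
end

section
/- Given any finite set S of n points in ℝ^d with the sup-norm, there exists a point x ∈ S such that the number of distinct nonzero distances ‖x−y‖_∞ for y ∈ S is at least ⌈n^{1/d}⌉ − 1. -/
open Finset

/-- number of distinct distances from `x` witnessed "from below" in coordinate `j`. -/
private noncomputable def cfun (d : ℕ) (S : Finset (Fin d → ℝ)) (j : Fin d)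
    (x : Fin d → ℝ) : ℕ :=
  (((S.erase x).filter (fun z => x j - z j = dist x z)).image (fun z => dist x z)).card

private lemma cfun_le (d : ℕ) (S : Finset (Fin d → ℝ)) (j : Fin d) (x : Fin d → ℝ) :
    cfun d S j x ≤ ((S.erase x).image (fun y => dist x y)).card :=
  Finset.card_le_card (Finset.image_subset_image (Finset.filter_subset _ _))

private lemma exists_coord {d : ℕ} (hd : 0 < d) (x y : Fin d → ℝ) :
    ∃ j, dist x y = dist (x j) (y j) := by
  obtain ⟨j, -, hj⟩ := Finset.exists_mem_eq_sup Finset.univ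
    (Finset.univ_nonempty_iff.mpr ⟨⟨0, hd⟩⟩) (fun j => nndist (x j) (y j))
  refine ⟨j, ?_⟩
  rw [dist_nndist, nndist_pi_def, hj, dist_nndist]

private lemma cfun_lt (d : ℕ) (S : Finset (Fin d → ℝ)) (j : Fin d) {x y : Fin d → ℝ}
    (hy : y ∈ S) (hne : x ≠ y) (hwit : x j - y j = dist x y) :
    cfun d S j y < cfun d S j x := by
  set r := dist x y with hr
  have hr0 : 0 < r := dist_pos.mpr hne
  set Ay := ((S.erase y).filter (fun z => y j - z j = dist y z)).image (fun z => dist y z)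
    with hAy
  set Ax := ((S.erase x).filter (fun z => x j - z j = dist x z)).image (fun z => dist x z)
    with hAx
  have hsub : insert r (Ay.image (fun s => s + r)) ⊆ Ax := by
    intro a ha
    rcases Finset.mem_insert.mp ha with ha | ha
    · subst ha
      exact Finset.mem_image.mpr ⟨y,
        Finset.mem_filter.mpr ⟨Finset.mem_erase.mpr ⟨hne.symm, hy⟩, hwit⟩, rfl⟩
    · obtain ⟨s, hs, rfl⟩ := Finset.mem_image.mp ha
      obtain ⟨z, hz, rfl⟩ := Finset.mem_image.mp hs
      have hz' := Finset.mem_filter.mp hz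
      have hzS : z ∈ S := Finset.mem_of_mem_erase hz'.1
      have hzy : z ≠ y := (Finset.mem_erase.mp hz'.1).1
      have hs0 : 0 < dist y z := dist_pos.mpr hzy.symm
      have h2 : x j - z j = dist y z + r := by
        have := hz'.2
        linarith
      have hdxz : dist x z = dist y z + r := by
        apply le_antisymm
        · calc dist x z ≤ dist x y + dist y z := dist_triangle _ _ _
            _ = dist y z + r := by rw [← hr]; ring
        · have h1 : dist (x j) (z j) ≤ dist x z := dist_le_pi_dist x z j
          rw [Real.dist_eq] at h1
          calc dist y z + r = x j - z j := h2.symm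
            _ ≤ |x j - z j| := le_abs_self _
            _ ≤ dist x z := h1
      have hzx : z ≠ x := by
        intro h
        rw [h, dist_self] at hdxz
        have : 0 < dist y x := dist_pos.mpr (Ne.symm hne)
        linarith
      exact Finset.mem_image.mpr ⟨z,
        Finset.mem_filter.mpr ⟨Finset.mem_erase.mpr ⟨hzx, hzS⟩, by rw [hdxz]; exact h2⟩,
        hdxz⟩
  have hnotmem : r ∉ Ay.image (fun s => s + r) := by
    intro hmem
    obtain ⟨s, hs, hsr⟩ := Finset.mem_image.mp hmem
    obtain ⟨z, hz, rfl⟩ := Finset.mem_image.mp hs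
    have hzy : z ≠ y := (Finset.mem_erase.mp (Finset.mem_filter.mp hz).1).1
    have : 0 < dist y z := dist_pos.mpr hzy.symm
    linarith
  have h1 : (insert r (Ay.image (fun s => s + r))).card = Ay.card + 1 := by
    rw [Finset.card_insert_of_notMem hnotmem,
      Finset.card_image_of_injective _ (add_left_injective r)]
  have h2 : Ay.card + 1 ≤ Ax.card := h1 ▸ Finset.card_le_card hsub
  show Ay.card < Ax.card
  omega

/-- Given a nonempty finite set `S` of `n` points in `ℝ^d` with the sup-norm, there is a
point of `S` from which at least `⌈n^(1/d)⌉ - 1` distinct nonzero distances to points of `S`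
occur. -/
theorem exists_point_many_distances_sup_norm (d : ℕ) (S : Finset (Fin d → ℝ))
    (hS : S.Nonempty) :
    ∃ x ∈ S, ⌈(S.card : ℝ) ^ ((d : ℝ)⁻¹)⌉₊ - 1 ≤
      ((S.erase x).image (fun y => dist x y)).card := by
  rcases Nat.eq_zero_or_pos d with hd | hd
  · subst hd
    obtain ⟨x, hx⟩ := hS
    refine ⟨x, hx, ?_⟩
    simp
  · obtain ⟨x, hx, hmax⟩ := S.exists_max_image
      (fun x => ((S.erase x).image (fun y => dist x y)).card) hS
    set t := ((S.erase x).image (fun y => dist x y)).card with ht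
    refine ⟨x, hx, ?_⟩
    have hma : ∀ (p : Fin d → ℝ), p ∈ S → ∀ j, cfun d S j p ≤ t :=
      fun p hp j => le_trans (cfun_le d S j p) (hmax p hp)
    have hinj : Set.InjOn
        (fun p : Fin d → ℝ => fun j : Fin d =>
          (⟨min (cfun d S j p) t, by omega⟩ : Fin (t + 1))) S := by
      intro a ha b hb hab
      by_contra hne
      obtain ⟨j, hj⟩ := exists_coord hd a b
      have heq : ∀ j, cfun d S j a = cfun d S j b := by
        intro j
        have h := congrFun hab j
        rw [Fin.mk.injEq, min_eq_left (hma a ha j), min_eq_left (hma b hb j)] at h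
        exact h
      rw [Real.dist_eq] at hj
      rcases le_total (b j) (a j) with hba | hba
      · have hwit : a j - b j = dist a b := by
          rw [hj, abs_of_nonneg (by linarith)]
        exact absurd (heq j) (cfun_lt d S j hb hne hwit).ne'
      · have hwit : b j - a j = dist b a := by
          rw [dist_comm, hj, abs_of_nonpos (by linarith)]; ring
        exact absurd (heq j) (cfun_lt d S j ha (Ne.symm hne) hwit).ne
    have hcard : S.card ≤ (t + 1) ^ d := by
      have := Finset.card_le_card_of_injOn _ (fun a _ => Finset.mem_univ
        ((fun p : Fin d → ℝ => fun j : Fin d =>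
          (⟨min (cfun d S j p) t, by omega⟩ : Fin (t + 1))) a)) hinj
      simpa [Finset.card_univ] using this
    have hle : (S.card : ℝ) ^ ((d : ℝ)⁻¹) ≤ ((t + 1 : ℕ) : ℝ) := by
      have h1 : (S.card : ℝ) ≤ ((t + 1 : ℕ) : ℝ) ^ (d : ℕ) := by
        exact_mod_cast hcard
      calc (S.card : ℝ) ^ ((d : ℝ)⁻¹)
          ≤ (((t + 1 : ℕ) : ℝ) ^ (d : ℕ)) ^ ((d : ℝ)⁻¹) :=
            Real.rpow_le_rpow (by positivity) h1 (by positivity)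
        _ = ((t + 1 : ℕ) : ℝ) := by
            rw [← Real.rpow_natCast ((t + 1 : ℕ) : ℝ) d,
              ← Real.rpow_mul (by positivity),
              mul_inv_cancel₀ (by exact_mod_cast hd.ne'), Real.rpow_one]
    have := Nat.ceil_le.mpr hle
    omega
end

section
/- Let S be a k-distance set in a metric space with distances ρ_1 < ρ_2 < ⋯ < ρ_k. If ρ_k/ρ_1 > 2^{k−1}, then there exists i ∈ {1,…,k−1} such that the relation x ∼ y ⟺ dist(x,y) ≤ ρ_i is transitive (and hence an equivalence relation) on S. -/
/-- If `S` is a `k`-distance set in a metric space with distances `ρ 0 < ⋯ < ρ (k-1)` and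
`ρ (k-1) / ρ 0 > 2 ^ (k-1)`, then for some `i < k - 1` the relation
`x ∼ y ↔ dist x y ≤ ρ i` is transitive on `S`. -/
theorem exists_transitive_distance_relation {X : Type*} [MetricSpace X] (S : Set X)
    (k : ℕ) (hk : 0 < k) (ρ : Fin k → ℝ) (hmono : StrictMono ρ)
    (hdist : {r : ℝ | ∃ x ∈ S, ∃ y ∈ S, x ≠ y ∧ dist x y = r} = Set.range ρ)
    (hratio : ρ ⟨k - 1, by omega⟩ / ρ ⟨0, hk⟩ > 2 ^ (k - 1)) :
    ∃ i : Fin k, (i : ℕ) < k - 1 ∧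
      ∀ x ∈ S, ∀ y ∈ S, ∀ z ∈ S, dist x y ≤ ρ i → dist y z ≤ ρ i → dist x z ≤ ρ i := by
  -- ρ 0 is a realized distance, hence positive
  have h0mem : ρ ⟨0, hk⟩ ∈ Set.range ρ := ⟨_, rfl⟩
  rw [← hdist] at h0mem
  obtain ⟨x0, -, y0, -, hne0, hd0⟩ := h0mem
  have hpos0 : 0 < ρ ⟨0, hk⟩ := hd0 ▸ dist_pos.mpr hne0
  have hpos : ∀ j : Fin k, 0 < ρ j := by
    intro j
    rcases eq_or_lt_of_le (Nat.zero_le j.val) with h | h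
    · have : (⟨0, hk⟩ : Fin k) = j := Fin.ext h
      exact this ▸ hpos0
    · exact hpos0.trans (hmono (show (⟨0, hk⟩ : Fin k) < j from h))
  -- find a gap index
  have hgap : ∃ m : ℕ, ∃ hm : m < k - 1, 2 * ρ ⟨m, by omega⟩ < ρ ⟨m + 1, by omega⟩ := by
    by_contra hcon
    push_neg at hcon
    have key : ∀ m : ℕ, ∀ hm : m < k, ρ ⟨m, hm⟩ ≤ 2 ^ m * ρ ⟨0, hk⟩ := by
      intro m
      induction m with
      | zero => intro hm; simp
      | succ n ih =>
        intro hm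
        have hn : n < k := by omega
        have h1 : ρ ⟨n + 1, hm⟩ ≤ 2 * ρ ⟨n, hn⟩ := hcon n (by omega)
        calc ρ ⟨n + 1, hm⟩ ≤ 2 * ρ ⟨n, hn⟩ := h1
          _ ≤ 2 * (2 ^ n * ρ ⟨0, hk⟩) := by linarith [ih hn]
          _ = 2 ^ (n + 1) * ρ ⟨0, hk⟩ := by ring
    have := key (k - 1) (by omega)
    rw [gt_iff_lt, lt_div_iff₀ hpos0] at hratio
    linarith
  obtain ⟨m, hm, hgapm⟩ := hgap
  refine ⟨⟨m, by omega⟩, hm, ?_⟩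
  intro x hx y hy z hz hxy hyz
  by_cases hxz : x = z
  · simp [hxz, (hpos _).le]
  · have hmem : dist x z ∈ Set.range ρ := by
      rw [← hdist]; exact ⟨x, hx, z, hz, hxz, rfl⟩
    obtain ⟨j, hj⟩ := hmem
    have htri : dist x z ≤ 2 * ρ ⟨m, by omega⟩ := by
      calc dist x z ≤ dist x y + dist y z := dist_triangle x y z
        _ ≤ 2 * ρ ⟨m, by omega⟩ := by linarith
    have hjlt : ρ j < ρ ⟨m + 1, by omega⟩ := by rw [← hj] at *; linarith
    have hlt : j < (⟨m + 1, by omega⟩ : Fin k) := hmono.lt_iff_lt.mp hjlt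
    have hv : j.val < m + 1 := hlt
    have : j ≤ (⟨m, by omega⟩ : Fin k) := Fin.le_def.mpr (Nat.lt_succ_iff.mp hv)
    rw [← hj]
    exact hmono.monotone this
end

section
/- The cardinality of a k-distance set in a d-dimensional normed real vector space is at most 2^{kd}. -/
open MeasureTheory Set Metric Module Pointwise
open scoped ENNReal NNReal

universe u

/-- The set of nonzero distances of a set. -/
def distSet {E : Type u} [PseudoMetricSpace E] (T : Set E) : Set ℝ :=
  {r : ℝ | ∃ x ∈ T, ∃ y ∈ T, x ≠ y ∧ dist x y = r}

lemma distSet_mono {E : Type u} [PseudoMetricSpace E] {s t : Set E} (h : s ⊆ t) :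
    distSet s ⊆ distSet t := by
  rintro r ⟨x, hx, y, hy, hxy, rfl⟩
  exact ⟨x, h hx, y, h hy, hxy, rfl⟩

/-- Key step: the case of a set whose affine span is everything. -/
lemma main_aux {E : Type u} [NormedAddCommGroup E] [NormedSpace ℝ E] [FiniteDimensional ℝ E]
    (k : ℕ)
    (IH : ∀ T : Finset E, (distSet (T : Set E)).encard ≤ k → T.card ≤ 2 ^ (k * finrank ℝ E))
    (T : Finset E) (hspan : affineSpan ℝ (T : Set E) = ⊤)
    (hcard : 1 < T.card)
    (hk : (distSet (T : Set E)).encard ≤ (k : ℕ∞) + 1) :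
    T.card ≤ 2 ^ ((k + 1) * finrank ℝ E) := by
  classical
  letI := borel E
  haveI : BorelSpace E := ⟨rfl⟩
  set d := finrank ℝ E with hd
  let μ : Measure E := (Module.finBasis ℝ E).addHaar
  haveI : μ.IsAddHaarMeasure := inferInstance
  -- the finite set of distances
  let AF : Finset ℝ := ((T ×ˢ T).filter fun p => p.1 ≠ p.2).image fun p => dist p.1 p.2
  have hAF : (AF : Set ℝ) = distSet (T : Set E) := by
    ext r
    simp only [AF, distSet, Finset.coe_image, Finset.mem_coe, Set.mem_image, Finset.mem_filter,
      Finset.mem_product, Set.mem_setOf_eq]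
    constructor
    · rintro ⟨⟨x, y⟩, ⟨⟨hx, hy⟩, hxy⟩, rfl⟩
      exact ⟨x, hx, y, hy, hxy, rfl⟩
    · rintro ⟨x, hx, y, hy, hxy, rfl⟩
      exact ⟨⟨x, y⟩, ⟨⟨hx, hy⟩, hxy⟩, rfl⟩
  obtain ⟨x₀, hx₀, y₀, hy₀, hxy₀⟩ := Finset.one_lt_card.mp hcard
  have hAFne : AF.Nonempty := by
    refine ⟨dist x₀ y₀, ?_⟩
    simp only [AF, Finset.mem_image, Finset.mem_filter, Finset.mem_product]
    exact ⟨⟨x₀, y₀⟩, ⟨⟨hx₀, hy₀⟩, hxy₀⟩, rfl⟩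
  set D := AF.max' hAFne with hDdef
  have hDmem : D ∈ AF := AF.max'_mem hAFne
  have hDdist : D ∈ distSet (T : Set E) := by rw [← hAF]; exact_mod_cast hDmem
  have hDpos : 0 < D := by
    obtain ⟨x, hx, y, hy, hxy, h⟩ := hDdist
    rw [← h]; exact dist_pos.2 hxy
  have hdistle : ∀ x ∈ T, ∀ y ∈ T, dist x y ≤ D := by
    intro x hx y hy
    rcases eq_or_ne x y with rfl | hne
    · simp [hDpos.le]
    · refine AF.le_max' _ ?_
      simp only [AF, Finset.mem_image, Finset.mem_filter, Finset.mem_product]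
      exact ⟨⟨x, y⟩, ⟨⟨hx, hy⟩, hne⟩, rfl⟩
  -- the convex hull
  set K := convexHull ℝ (T : Set E) with hKdef
  have hKconv : Convex ℝ K := convex_convexHull _ _
  have hKcompact : IsCompact K := T.finite_toSet.isCompact_convexHull ℝ
  have hTK : (T : Set E) ⊆ K := subset_convexHull _ _
  have hKdist : ∀ p ∈ K, ∀ q ∈ K, dist p q ≤ D := by
    have h1 : ∀ y ∈ (T : Set E), K ⊆ closedBall y D := by
      intro y hy
      refine convexHull_min (fun x hx => ?_) (convex_closedBall y D)
      exact mem_closedBall.2 (hdistle x hx y hy)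
    intro p hp q hq
    have h2 : K ⊆ closedBall p D := by
      refine convexHull_min (fun y hy => ?_) (convex_closedBall p D)
      have := h1 y hy hp
      rw [mem_closedBall] at this ⊢
      rwa [dist_comm]
    have h3 := mem_closedBall.1 (h2 hq)
    rwa [dist_comm] at h3
  have hKint : (interior K).Nonempty := by
    rw [hKconv.interior_nonempty_iff_affineSpan_eq_top, hKdef, affineSpan_convexHull]
    exact hspan
  have hμK0 : μ K ≠ 0 := by
    obtain ⟨z, hz⟩ := hKint
    refine fun h => (isOpen_interior.measure_pos μ ⟨z, hz⟩).ne' ?_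
    exact le_antisymm (le_trans (measure_mono interior_subset) h.le) zero_le
  have hμKtop : μ K ≠ ⊤ := hKcompact.measure_lt_top.ne
  -- the homothetic copies
  set U : E → Set E := fun x => (2⁻¹ : ℝ) • (x +ᵥ K) with hUdef
  have hUsub : ∀ x ∈ T, U x ⊆ K := by
    intro x hx z hz
    obtain ⟨w, hw, rfl⟩ := hz
    obtain ⟨a, ha, rfl⟩ := hw
    have h := hKconv (hTK hx) ha (by norm_num : (0:ℝ) ≤ 2⁻¹) (by norm_num : (0:ℝ) ≤ 2⁻¹)
      (by norm_num)
    simpa [vadd_eq_add, smul_add] using h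
  have hUmeas : ∀ x : E, μ (U x) = ((2 : ℝ≥0∞) ^ d)⁻¹ * μ K := by
    intro x
    rw [hUdef]
    simp only []
    rw [Measure.addHaar_smul, measure_vadd, ← hd]
    have habs : ENNReal.ofReal |(2⁻¹:ℝ) ^ d| = ((2 : ℝ≥0∞) ^ d)⁻¹ := by
      rw [abs_of_nonneg (by positivity : (0:ℝ) ≤ (2⁻¹:ℝ) ^ d)]
      rw [show ((2:ℝ)⁻¹) ^ d = ((2:ℝ) ^ d)⁻¹ by rw [inv_pow]]
      rw [ENNReal.ofReal_inv_of_pos (by positivity)]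
      congr 1
      rw [ENNReal.ofReal_pow (by norm_num)]
      norm_num
    rw [habs]
  have hUconv : ∀ x : E, Convex ℝ (U x) := by
    intro x
    exact (hKconv.vadd x).smul _
  have hUint : ∀ x : E, μ (U x) ≤ μ (interior (U x)) := by
    intro x
    calc μ (U x) ≤ μ (interior (U x) ∪ frontier (U x)) := by
          refine measure_mono ?_
          rw [← closure_eq_interior_union_frontier]
          exact subset_closure
      _ ≤ μ (interior (U x)) + μ (frontier (U x)) := measure_union_le _ _
      _ = μ (interior (U x)) := by rw [(hUconv x).addHaar_frontier μ, add_zero]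
  have hUintK : ∀ x ∈ T, interior (U x) ⊆ K := fun x hx =>
    interior_subset.trans (hUsub x hx)
  -- interior description
  have hUinterior : ∀ x : E, interior (U x) = (2⁻¹ : ℝ) • (x +ᵥ interior K) := by
    intro x
    rw [hUdef]
    simp only []
    rw [interior_smul₀ (by norm_num : (2⁻¹:ℝ) ≠ 0), interior_vadd]
  -- strict diameter bound inside the interior
  have hstrict : ∀ a ∈ interior K, ∀ b ∈ interior K, a ≠ b → dist a b < D := by
    intro a ha b hb hab
    obtain ⟨ε, hε, hball⟩ := Metric.isOpen_iff.1 isOpen_interior a ha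
    have hdab : 0 < dist a b := dist_pos.2 hab
    set t := ε / (2 * dist a b) with htdef
    have ht : 0 < t := by positivity
    set c := a + t • (a - b) with hcdef
    have hca : dist c a = ε / 2 := by
      rw [hcdef, dist_eq_norm]
      simp only [add_sub_cancel_left, norm_smul, Real.norm_eq_abs, abs_of_pos ht]
      rw [htdef, ← dist_eq_norm]
      field_simp
    have hcK : c ∈ K := interior_subset (hball (by rw [mem_ball, hca]; linarith))
    have hcb : dist c b = (1 + t) * dist a b := by
      rw [hcdef, dist_eq_norm, dist_eq_norm]
      have : a + t • (a - b) - b = (1 + t) • (a - b) := by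
        module
      rw [this, norm_smul, Real.norm_eq_abs, abs_of_pos (by linarith)]
    have hle : dist c b ≤ D := hKdist c hcK b (interior_subset hb)
    rw [hcb] at hle
    nlinarith
  -- bound for the multiplicity sets
  have hmult : ∀ z : E, ((T.filter fun x => z ∈ interior (U x)).card : ℝ≥0∞)
      ≤ (2 ^ (k * d) : ℕ) := by
    intro z
    have hcard' : (T.filter fun x => z ∈ interior (U x)).card ≤ 2 ^ (k * d) := by
      apply IH
      have hsub : distSet ((T.filter fun x => z ∈ interior (U x)) : Set E)
          ⊆ distSet (T : Set E) \ {D} := by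
        rintro r ⟨x, hx, y, hy, hxy, rfl⟩
        simp only [Finset.coe_filter, Set.mem_setOf_eq] at hx hy
        obtain ⟨hxT, hxU⟩ := hx
        obtain ⟨hyT, hyU⟩ := hy
        refine ⟨⟨x, hxT, y, hyT, hxy, rfl⟩, ?_⟩
        -- show dist x y < D
        rw [hUinterior] at hxU hyU
        obtain ⟨w₁, hw₁, hzw₁⟩ := hxU
        obtain ⟨a, ha, rfl⟩ := hw₁
        obtain ⟨w₂, hw₂, hzw₂⟩ := hyU
        obtain ⟨b, hb, rfl⟩ := hw₂
        have heq : x + a = y + b := by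
          have h2 := hzw₁.trans hzw₂.symm
          simp only [vadd_eq_add] at h2
          exact smul_right_injective E (by norm_num : (2⁻¹:ℝ) ≠ 0) h2
        have hab : a ≠ b := by
          intro h
          apply hxy
          rw [h] at heq
          exact add_right_cancel heq
        have hdxy : dist x y = dist b a := by
          rw [dist_eq_norm, dist_eq_norm]
          congr 1
          rw [sub_eq_sub_iff_add_eq_add, heq, add_comm]
        have hlt := hstrict b hb a ha (Ne.symm hab)
        simp only [Set.mem_singleton_iff]
        intro hcontra
        rw [hcontra] at hdxy
        exact absurd hdxy.symm (ne_of_lt hlt)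
      calc (distSet ((T.filter fun x => z ∈ interior (U x)) : Set E)).encard
          ≤ (distSet (T : Set E) \ {D}).encard := Set.encard_le_encard hsub
        _ ≤ k := by
            have h1 := Set.encard_diff_singleton_add_one hDdist
            have h2 : (distSet (T : Set E) \ {D}).encard + 1 ≤ (k : ℕ∞) + 1 := by
              rw [h1]; exact hk
            exact (WithTop.add_le_add_iff_right (by simp : (1:ℕ∞) ≠ ⊤)).mp h2
    exact_mod_cast hcard'
  -- the counting argument
  have hcount : ∑ x ∈ T, μ (interior (U x)) ≤ (2 ^ (k * d) : ℕ) * μ K := by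
    have hmeasInt : ∀ x ∈ T, Measurable ((interior (U x)).indicator fun _ => (1 : ℝ≥0∞)) :=
      fun x _ => measurable_const.indicator isOpen_interior.measurableSet
    have h1 : ∑ x ∈ T, μ (interior (U x))
        = ∫⁻ z, ∑ x ∈ T, (interior (U x)).indicator (fun _ => (1 : ℝ≥0∞)) z ∂μ := by
      rw [lintegral_finset_sum _ hmeasInt]
      exact Finset.sum_congr rfl fun x _ =>
        (lintegral_indicator_one isOpen_interior.measurableSet).symm
    rw [h1]
    have h2 : ∀ z : E, ∑ x ∈ T, (interior (U x)).indicator (fun _ => (1 : ℝ≥0∞)) z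
        ≤ K.indicator (fun _ => ((2 ^ (k * d) : ℕ) : ℝ≥0∞)) z := by
      intro z
      by_cases hzK : z ∈ K
      · rw [Set.indicator_of_mem hzK]
        have : ∑ x ∈ T, (interior (U x)).indicator (fun _ => (1 : ℝ≥0∞)) z
            = ((T.filter fun x => z ∈ interior (U x)).card : ℝ≥0∞) := by
          rw [Finset.card_eq_sum_ones, Nat.cast_sum]
          rw [Finset.sum_filter]
          congr 1
          ext x
          by_cases hzU : z ∈ interior (U x) <;> simp [hzU, Set.indicator_apply]
        rw [this]
        exact hmult z
      · rw [Set.indicator_of_notMem hzK]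
        have : ∀ x ∈ T, (interior (U x)).indicator (fun _ => (1 : ℝ≥0∞)) z = 0 := by
          intro x hx
          exact Set.indicator_of_notMem (fun h => hzK (hUintK x hx h)) _
        rw [Finset.sum_congr rfl this]
        simp
    calc ∫⁻ z, ∑ x ∈ T, (interior (U x)).indicator (fun _ => (1 : ℝ≥0∞)) z ∂μ
        ≤ ∫⁻ z, K.indicator (fun _ => ((2 ^ (k * d) : ℕ) : ℝ≥0∞)) z ∂μ := lintegral_mono h2
      _ = (2 ^ (k * d) : ℕ) * μ K := by
          rw [lintegral_indicator_const hKcompact.measurableSet]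
  -- put everything together
  have hsum : (T.card : ℝ≥0∞) * (((2 : ℝ≥0∞) ^ d)⁻¹ * μ K) ≤ (2 ^ (k * d) : ℕ) * μ K := by
    calc (T.card : ℝ≥0∞) * (((2 : ℝ≥0∞) ^ d)⁻¹ * μ K)
        = ∑ _x ∈ T, ((2 : ℝ≥0∞) ^ d)⁻¹ * μ K := by
          rw [Finset.sum_const, nsmul_eq_mul]
      _ = ∑ x ∈ T, μ (U x) := by
          refine Finset.sum_congr rfl fun x _ => ?_
          rw [hUmeas x]
      _ ≤ ∑ x ∈ T, μ (interior (U x)) := Finset.sum_le_sum fun x _ => hUint x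
      _ ≤ (2 ^ (k * d) : ℕ) * μ K := hcount
  -- cancel μ K
  have hcancel : (T.card : ℝ≥0∞) * ((2 : ℝ≥0∞) ^ d)⁻¹ ≤ (2 ^ (k * d) : ℕ) := by
    rw [← ENNReal.mul_le_mul_iff_left hμK0 hμKtop]
    calc (T.card : ℝ≥0∞) * ((2 : ℝ≥0∞) ^ d)⁻¹ * μ K
        = (T.card : ℝ≥0∞) * (((2 : ℝ≥0∞) ^ d)⁻¹ * μ K) := by ring
      _ ≤ (2 ^ (k * d) : ℕ) * μ K := hsum
  have hfinal : (T.card : ℝ≥0∞) ≤ (2 ^ (k * d) : ℕ) * (2 : ℝ≥0∞) ^ d := by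
    have h3 := mul_le_mul_left hcancel ((2 : ℝ≥0∞) ^ d)
    rwa [mul_assoc, ENNReal.inv_mul_cancel (pow_ne_zero d two_ne_zero)
      (ENNReal.pow_ne_top ENNReal.ofNat_ne_top), mul_one] at h3
  have : (T.card : ℝ≥0∞) ≤ ((2 ^ ((k + 1) * d) : ℕ) : ℝ≥0∞) := by
    refine hfinal.trans_eq ?_
    push_cast
    rw [← pow_add]
    congr 1
    ring
  exact_mod_cast this

lemma finset_bound : ∀ (k : ℕ) {E : Type u} [NormedAddCommGroup E] [NormedSpace ℝ E]
    [FiniteDimensional ℝ E] (T : Finset E),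
    (distSet (T : Set E)).encard ≤ (k : ℕ∞) → T.card ≤ 2 ^ (k * finrank ℝ E) := by
  intro k
  induction k with
  | zero =>
    intro E _ _ _ T hT
    simp only [Nat.cast_zero, nonpos_iff_eq_zero, Set.encard_eq_zero] at hT
    rw [zero_mul, pow_zero]
    refine Finset.card_le_one.2 fun a ha b hb => ?_
    by_contra hne
    have : dist a b ∈ distSet (T : Set E) := ⟨a, ha, b, hb, hne, rfl⟩
    rw [hT] at this
    exact this
  | succ k ih =>
    intro E _ _ _ T hk
    classical
    rcases le_or_gt T.card 1 with hcard | hcard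
    · exact hcard.trans (Nat.one_le_two_pow)
    obtain ⟨x₀, hx₀, -⟩ := Finset.one_lt_card.mp hcard
    set T₀ : Finset E := T.image (· - x₀) with hT₀def
    have hcard₀ : T₀.card = T.card :=
      Finset.card_image_of_injective _ (sub_left_injective)
    have hdist₀ : distSet (T₀ : Set E) = distSet (T : Set E) := by
      ext r
      constructor
      · rintro ⟨x, hx, y, hy, hxy, rfl⟩
        simp only [hT₀def, Finset.coe_image, Set.mem_image, Finset.mem_coe] at hx hy
        obtain ⟨x', hx', rfl⟩ := hx
        obtain ⟨y', hy', rfl⟩ := hy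
        exact ⟨x', hx', y', hy', fun h => hxy (by rw [h]), (dist_sub_right x' y' x₀).symm⟩
      · rintro ⟨x, hx, y, hy, hxy, rfl⟩
        refine ⟨x - x₀, ?_, y - x₀, ?_, fun h => hxy (by
          have := sub_left_injective h; exact this), dist_sub_right x y x₀⟩
        · simp only [hT₀def, Finset.coe_image, Set.mem_image, Finset.mem_coe]
          exact ⟨x, hx, rfl⟩
        · simp only [hT₀def, Finset.coe_image, Set.mem_image, Finset.mem_coe]
          exact ⟨y, hy, rfl⟩
    set V : Submodule ℝ E := Submodule.span ℝ (T₀ : Set E) with hVdef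
    set T' : Finset V := T₀.attach.map
      ⟨fun x => (⟨x.1, Submodule.subset_span x.2⟩ : V),
        fun a b h => by apply Subtype.ext; exact congrArg (fun v : V => (v : E)) h⟩ with hT'def
    have hmem : ∀ x : V, x ∈ T' ↔ (x : E) ∈ T₀ := by
      intro x
      simp only [hT'def, Finset.mem_map, Finset.mem_attach, true_and,
        Function.Embedding.coeFn_mk]
      constructor
      · rintro ⟨a, rfl⟩; exact a.2
      · intro h; exact ⟨⟨(x : E), h⟩, Subtype.ext rfl⟩
    have hcard' : T'.card = T₀.card := by
      rw [hT'def, Finset.card_map, Finset.card_attach]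
    have hdist' : distSet (T' : Set V) = distSet (T₀ : Set E) := by
      ext r
      constructor
      · rintro ⟨x, hx, y, hy, hxy, rfl⟩
        exact ⟨(x : E), (hmem x).1 hx, (y : E), (hmem y).1 hy,
          fun h => hxy (Subtype.ext h), (Subtype.dist_eq x y).symm⟩
      · rintro ⟨x, hx, y, hy, hxy, rfl⟩
        refine ⟨⟨x, Submodule.subset_span hx⟩, (hmem _).2 hx,
          ⟨y, Submodule.subset_span hy⟩, (hmem _).2 hy,
          fun h => hxy (congrArg Subtype.val h), rfl⟩
    have himg : (V.subtype) '' (T' : Set V) = (T₀ : Set E) := by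
      ext z
      constructor
      · rintro ⟨x, hx, rfl⟩
        exact (hmem x).1 hx
      · intro hz
        exact ⟨⟨z, Submodule.subset_span hz⟩, (hmem _).2 hz, rfl⟩
    have hspanV : Submodule.span ℝ (T' : Set V) = ⊤ := by
      apply Submodule.map_injective_of_injective V.injective_subtype
      rw [Submodule.map_span, Submodule.map_top, Submodule.range_subtype, himg]
    have h0T₀ : (0 : E) ∈ T₀ := by
      simp only [hT₀def, Finset.mem_image]
      exact ⟨x₀, hx₀, sub_self x₀⟩
    have h0 : (0 : V) ∈ T' := (hmem 0).2 (by simpa using h0T₀)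
    have haff : affineSpan ℝ (T' : Set V) = ⊤ := by
      rw [AffineSubspace.affineSpan_eq_top_iff_vectorSpan_eq_top_of_nonempty ℝ ↥V ↥V ⟨0, Finset.mem_coe.2 h0⟩]
      rw [← top_le_iff, ← hspanV, vectorSpan_def]
      refine Submodule.span_le.2 fun x hx => Submodule.subset_span ?_
      exact ⟨x, hx, 0, h0, by simp⟩
    have hcardV : 1 < T'.card := by rw [hcard', hcard₀]; exact hcard
    have hkV : (distSet (T' : Set V)).encard ≤ (k : ℕ∞) + 1 := by
      rw [hdist', hdist₀]
      refine le_trans hk ?_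
      push_cast
      rfl
    have hbound := main_aux k (fun T'' h => ih T'' h) T' haff hcardV hkV
    calc T.card = T'.card := by rw [hcard', hcard₀]
      _ ≤ 2 ^ ((k + 1) * finrank ℝ V) := hbound
      _ ≤ 2 ^ ((k + 1) * finrank ℝ E) := by
          refine Nat.pow_le_pow_right (by norm_num) ?_
          exact Nat.mul_le_mul_left _ (Submodule.finrank_le V)

/-- A `k`-distance set in a `d`-dimensional real normed vector space has
cardinality at most `2 ^ (k * d)`. -/
theorem kDistanceSet_card_le_two_pow {E : Type*} [NormedAddCommGroup E] [NormedSpace ℝ E]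
    [FiniteDimensional ℝ E] (d k : ℕ) (hd : Module.finrank ℝ E = d) (S : Set E)
    (hk : {r : ℝ | ∃ x ∈ S, ∃ y ∈ S, x ≠ y ∧ dist x y = r}.encard = k) :
    S.encard ≤ (2 ^ (k * d) : ℕ) := by
  subst hd
  by_contra hcon
  push_neg at hcon
  have hle : ((2 ^ (k * finrank ℝ E) : ℕ) : ℕ∞) + 1 ≤ S.encard :=
    Order.add_one_le_of_lt hcon
  obtain ⟨t, hts, htcard⟩ := Set.exists_subset_encard_eq (by exact_mod_cast hle)
  have htfin : t.Finite := by
    apply Set.finite_of_encard_eq_coe (k := 2 ^ (k * finrank ℝ E) + 1)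
    exact_mod_cast htcard
  have hdistsub : distSet t ⊆ {r : ℝ | ∃ x ∈ S, ∃ y ∈ S, x ≠ y ∧ dist x y = r} :=
    distSet_mono hts
  have hbound := finset_bound k (E := E) htfin.toFinset (by
    rw [show ((htfin.toFinset : Finset E) : Set E) = t from htfin.coe_toFinset]
    calc (distSet t).encard ≤ _ := Set.encard_le_encard hdistsub
      _ = (k : ℕ∞) := hk
      _ ≤ (k : ℕ∞) := le_refl _)
  have hcard : htfin.toFinset.card = 2 ^ (k * finrank ℝ E) + 1 := by
    have := htcard
    rw [← htfin.coe_toFinset, Set.encard_coe_eq_coe_finsetCard] at this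
    exact_mod_cast this
  omega
end

section
/- Let S = {x_1,…,x_m} be a finite set in a d-dimensional normed real vector space with minimum distance ρ_1 and maximum distance ρ_k between distinct points. Then m ≤ (1 + ρ_k/ρ_1)^d. -/
open MeasureTheory Set ENNReal Pointwise

theorem aux_card_le {E : Type*} [NormedAddCommGroup E] [NormedSpace ℝ E]
    [FiniteDimensional ℝ E] (d : ℕ) (hd : Module.finrank ℝ E = d) (S : Finset E)
    (hS : 2 ≤ S.card) (ρ₁ ρₖ : ℝ)
    (h₁ : IsLeast {r : ℝ | ∃ x ∈ S, ∃ y ∈ S, x ≠ y ∧ dist x y = r} ρ₁)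
    (hₖ : IsGreatest {r : ℝ | ∃ x ∈ S, ∃ y ∈ S, x ≠ y ∧ dist x y = r} ρₖ)
    (ε : ℝ) (hε : 0 < ε) :
    (S.card : ℝ) ≤ (1 + (ρₖ + 3 * ε) / ρ₁) ^ d := by
  obtain ⟨⟨x₀, hx₀S, y₀, hy₀S, hxy₀, hdist₀⟩, h₁lb⟩ := h₁
  have hρ₁ : 0 < ρ₁ := by rw [← hdist₀]; exact dist_pos.2 hxy₀
  have hρₖρ₁ : ρ₁ ≤ ρₖ := hₖ.2 ⟨x₀, hx₀S, y₀, hy₀S, hxy₀, hdist₀⟩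
  have hρₖ : 0 < ρₖ := lt_of_lt_of_le hρ₁ hρₖρ₁
  set l : ℝ := ρ₁ / (ρ₁ + ρₖ + 3 * ε) with hl_def
  have hden : 0 < ρ₁ + ρₖ + 3 * ε := by positivity
  have hl_pos : 0 < l := by positivity
  have hl_lt : l < 1 := by rw [hl_def, div_lt_one hden]; linarith
  borelize E
  set μ : Measure E := Measure.addHaar with hμ
  set C : Set E := convexHull ℝ (S : Set E) with hC
  set K : Set E := C + Metric.closedBall (0 : E) ε with hK
  have hKconv : Convex ℝ K := by
    rw [hK]; exact (convex_convexHull ℝ _).add (convex_closedBall (0:E) ε)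
  have hKcomp : IsCompact K := by
    rw [hK]
    exact ((S.finite_toSet).isCompact_convexHull (𝕜 := ℝ)).add (isCompact_closedBall (0:E) ε)
  have hSK : ∀ x ∈ S, x ∈ K := by
    intro x hx
    exact ⟨x, subset_convexHull ℝ _ hx, 0, by simp [hε.le], by simp⟩
  have hdiamS : ∀ x ∈ (S : Set E), ∀ y ∈ (S : Set E), dist x y ≤ ρₖ := by
    intro x hx y hy
    rcases eq_or_ne x y with rfl | hne
    · simp [hρₖ.le]
    · exact hₖ.2 ⟨x, hx, y, hy, hne, rfl⟩
  have hdiamC : ∀ x ∈ C, ∀ y ∈ C, dist x y ≤ ρₖ := by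
    have h : Metric.diam C ≤ ρₖ := by
      rw [hC, convexHull_diam]
      exact Metric.diam_le_of_forall_dist_le hρₖ.le hdiamS
    have hbdd : Bornology.IsBounded C := hKcomp.isBounded.subset
      (by intro z hz; exact ⟨z, hz, 0, by simp [hε.le], by simp⟩)
    intro x hx y hy
    exact le_trans (Metric.dist_le_diam_of_mem hbdd hx hy) h
  have hdiamK : ∀ x ∈ K, ∀ y ∈ K, dist x y ≤ ρₖ + 2 * ε := by
    rintro _ ⟨c, hc, e, he, rfl⟩ _ ⟨c', hc', e', he', rfl⟩
    have h1 : ‖e‖ ≤ ε := by simpa using mem_closedBall_iff_norm.1 he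
    have h2 : ‖e'‖ ≤ ε := by simpa using mem_closedBall_iff_norm.1 he'
    have h3 : dist c c' ≤ ρₖ := hdiamC c hc c' hc'
    calc dist (c + e) (c' + e') = ‖(c - c') + (e - e')‖ := by
          rw [dist_eq_norm]; congr 1; abel
      _ ≤ ‖c - c'‖ + ‖e - e'‖ := norm_add_le _ _
      _ ≤ ρₖ + (‖e‖ + ‖e'‖) := by
          gcongr
          · rw [← dist_eq_norm]; exact h3
          · exact norm_sub_le _ _
      _ ≤ ρₖ + 2 * ε := by linarith
  set A : E → Set E := fun x => ((1 - l) • x) +ᵥ (l • K) with hA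
  have hmemA : ∀ x z, z ∈ A x ↔ ∃ k ∈ K, z = (1 - l) • x + l • k := by
    intro x z
    simp only [hA, Set.mem_vadd_set, Set.mem_smul_set, vadd_eq_add]
    constructor
    · rintro ⟨_, ⟨k, hk, rfl⟩, rfl⟩; exact ⟨k, hk, rfl⟩
    · rintro ⟨k, hk, rfl⟩; exact ⟨l • k, ⟨k, hk, rfl⟩, rfl⟩
  have hAK : ∀ x ∈ S, A x ⊆ K := by
    intro x hx z hz
    obtain ⟨k, hk, rfl⟩ := (hmemA x z).1 hz
    exact hKconv (hSK x hx) hk (by linarith) hl_pos.le (by ring)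
  have hdisj : (S : Set E).PairwiseDisjoint A := by
    intro x hx y hy hne
    rw [Function.onFun, Set.disjoint_left]
    intro z hzx hzy
    obtain ⟨k, hk, hzk⟩ := (hmemA x z).1 hzx
    obtain ⟨k', hk', hzk'⟩ := (hmemA y z).1 hzy
    have heq : (1 - l) • (x - y) = l • (k' - k) := by
      have h := hzk.symm.trans hzk'
      linear_combination (norm := module) h
    have hnorm : (1 - l) * ‖x - y‖ = l * ‖k' - k‖ := by
      have := congrArg norm heq
      rwa [norm_smul, norm_smul, Real.norm_eq_abs, Real.norm_eq_abs,
        abs_of_nonneg (by linarith), abs_of_nonneg hl_pos.le] at this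
    have hge : ρ₁ ≤ ‖x - y‖ := by
      rw [← dist_eq_norm]
      exact h₁lb ⟨x, hx, y, hy, hne, rfl⟩
    have hkk : ‖k' - k‖ ≤ ρₖ + 2 * ε := by
      rw [← dist_eq_norm]; exact hdiamK k' hk' k hk
    have hfinal : (1 - l) * ρ₁ ≤ l * (ρₖ + 2 * ε) := by
      calc (1 - l) * ρ₁ ≤ (1 - l) * ‖x - y‖ := by nlinarith
        _ = l * ‖k' - k‖ := hnorm
        _ ≤ l * (ρₖ + 2 * ε) := by nlinarith
    rw [hl_def, div_mul_eq_mul_div, one_sub_div hden.ne', div_mul_eq_mul_div,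
      div_le_div_iff₀ hden hden] at hfinal
    nlinarith [mul_pos (mul_pos hε hρ₁) hden]
  have hAcomp : ∀ x : E, IsCompact (A x) := by
    intro x
    have h1 : IsCompact (l • K) := by
      rw [← Set.image_smul]; exact hKcomp.image (continuous_const_smul l)
    simp only [hA]
    rw [← Set.image_vadd]
    exact h1.image (continuous_const_vadd _)
  have hAmeasure : ∀ x : E, μ (A x) = ENNReal.ofReal (l ^ d) * μ K := by
    intro x
    simp only [hA]
    rw [measure_vadd, Measure.addHaar_smul, hd, abs_of_nonneg (by positivity)]
  have hunion : μ (⋃ x ∈ S, A x) = (S.card : ℝ≥0∞) * (ENNReal.ofReal (l ^ d) * μ K) := by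
    rw [measure_biUnion_finset hdisj (fun x _ => (hAcomp x).measurableSet)]
    simp [hAmeasure, Finset.sum_const, nsmul_eq_mul]
  have hsub : (⋃ x ∈ S, A x) ⊆ K := Set.iUnion₂_subset fun x hx => hAK x hx
  have hKpos : 0 < μ K := by
    refine lt_of_lt_of_le (Metric.measure_ball_pos μ x₀ hε) (measure_mono ?_)
    intro z hz
    refine ⟨x₀, subset_convexHull ℝ _ hx₀S, z - x₀, ?_, by module⟩
    simpa using (mem_closedBall_iff_norm.1 (Metric.ball_subset_closedBall hz))
  have hKfin : μ K ≠ ⊤ := hKcomp.measure_lt_top.ne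
  have hmu : (S.card : ℝ≥0∞) * ENNReal.ofReal (l ^ d) * μ K ≤ 1 * μ K := by
    rw [one_mul, mul_assoc, ← hunion]
    exact measure_mono hsub
  have hle1 : (S.card : ℝ≥0∞) * ENNReal.ofReal (l ^ d) ≤ 1 :=
    (ENNReal.mul_le_mul_iff_left hKpos.ne' hKfin).1 hmu
  have hreal : (S.card : ℝ) * l ^ d ≤ 1 := by
    have h := hle1
    rw [← ENNReal.ofReal_natCast, ← ENNReal.ofReal_mul (by positivity),
      ← ENNReal.ofReal_one] at h
    exact (ENNReal.ofReal_le_ofReal_iff (by norm_num)).1 h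
  have h1l : 1 / l = 1 + (ρₖ + 3 * ε) / ρ₁ := by
    rw [hl_def]; field_simp; ring
  have : (S.card : ℝ) ≤ (1 / l) ^ d := by
    rw [div_pow, one_pow, le_div_iff₀ (by positivity)]
    exact hreal
  rwa [h1l] at this

/-- If `S` is a finite set of at least two points in a `d`-dimensional real normed space,
with least nonzero distance `ρ₁` and greatest distance `ρₖ`, then
`|S| ≤ (1 + ρₖ/ρ₁)^d`. -/
theorem card_le_of_min_max_dist {E : Type*} [NormedAddCommGroup E] [NormedSpace ℝ E]
    [FiniteDimensional ℝ E] (d : ℕ) (hd : Module.finrank ℝ E = d) (S : Finset E)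
    (hS : 2 ≤ S.card) (ρ₁ ρₖ : ℝ)
    (h₁ : IsLeast {r : ℝ | ∃ x ∈ S, ∃ y ∈ S, x ≠ y ∧ dist x y = r} ρ₁)
    (hₖ : IsGreatest {r : ℝ | ∃ x ∈ S, ∃ y ∈ S, x ≠ y ∧ dist x y = r} ρₖ) :
    (S.card : ℝ) ≤ (1 + ρₖ / ρ₁) ^ d := by
  set f : ℝ → ℝ := fun ε => (1 + (ρₖ + 3 * ε) / ρ₁) ^ d with hf
  have hcont : Continuous f := by
    apply Continuous.pow
    exact continuous_const.add ((continuous_const.add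
      (continuous_const.mul continuous_id)).div_const ρ₁)
  have htend : Filter.Tendsto f (nhdsWithin 0 (Set.Ioi 0)) (nhds ((1 + ρₖ / ρ₁) ^ d)) := by
    have h0 : f 0 = (1 + ρₖ / ρ₁) ^ d := by simp [hf]
    rw [← h0]
    exact (hcont.tendsto 0).mono_left nhdsWithin_le_nhds
  refine ge_of_tendsto htend ?_
  exact eventually_nhdsWithin_of_forall fun ε hε =>
    aux_card_le d hd S hS ρ₁ ρₖ h₁ hₖ ε hε
end

section
/- For any symmetric convex body C in ℝ² (compact, convex, with nonempty interior, C = −C), there exist linearly independent x₀, y₀ on the boundary of C such that C ⊆ {λx₀ + μy₀ : −1 ≤ λ, μ ≤ 1} and the triangle with vertices 0, x₀, y₀ has maximal area among triangles with two vertices on the boundary of C and one at the origin. -/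
open MeasureTheory

noncomputable def dmap (x y : ℝ × ℝ) : (ℝ × ℝ) →ₗ[ℝ] (ℝ × ℝ) :=
  Matrix.toLin (Module.Basis.finTwoProd ℝ) (Module.Basis.finTwoProd ℝ) !![x.1, y.1; x.2, y.2]

lemma dmap_apply (x y p : ℝ × ℝ) : dmap x y p = p.1 • x + p.2 • y := by
  simp [dmap, Matrix.toLin_apply, Module.Basis.coe_finTwoProd_repr, Fin.sum_univ_two,
    Matrix.mulVec, Matrix.vecHead, Matrix.vecTail, Module.Basis.finTwoProd_zero,
    Module.Basis.finTwoProd_one, Prod.ext_iff]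
  constructor <;> ring

lemma dmap_det (x y : ℝ × ℝ) : LinearMap.det (dmap x y) = x.1 * y.2 - y.1 * x.2 := by
  rw [dmap, LinearMap.det_toLin]
  simp [Matrix.det_fin_two_of]

lemma triangle_vol (x y : ℝ × ℝ) :
    volume (convexHull ℝ {(0 : ℝ × ℝ), x, y}) =
      ENNReal.ofReal |x.1 * y.2 - y.1 * x.2| *
        volume (convexHull ℝ {(0 : ℝ × ℝ), (1, 0), (0, 1)}) := by
  have h1 : dmap x y '' {(0 : ℝ × ℝ), (1, 0), (0, 1)} = {0, x, y} := by
    simp [Set.image_insert_eq, dmap_apply]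
  calc volume (convexHull ℝ {(0 : ℝ × ℝ), x, y})
      = volume (dmap x y '' convexHull ℝ {(0 : ℝ × ℝ), (1, 0), (0, 1)}) := by
        rw [LinearMap.image_convexHull, h1]
    _ = _ := by rw [Measure.addHaar_image_linearMap, dmap_det]

/-- For a symmetric convex body `C` in the plane there are linearly independent boundary
points `x₀, y₀` spanning a maximal-area triangle with the origin, such that `C` is contained
in the parallelogram `{λ•x₀ + μ•y₀ : |λ| ≤ 1, |μ| ≤ 1}`. -/
theorem exists_max_area_triangle_parallelogram (C : Set (ℝ × ℝ))
    (hC : IsCompact C) (hconv : Convex ℝ C) (hint : (interior C).Nonempty)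
    (hsymm : C = -C) :
    ∃ x₀ ∈ frontier C, ∃ y₀ ∈ frontier C,
      LinearIndependent ℝ ![x₀, y₀] ∧
      C ⊆ {p : ℝ × ℝ | ∃ a b : ℝ, |a| ≤ 1 ∧ |b| ≤ 1 ∧ p = a • x₀ + b • y₀} ∧
      ∀ x ∈ frontier C, ∀ y ∈ frontier C,
        volume (convexHull ℝ {(0 : ℝ × ℝ), x, y}) ≤
          volume (convexHull ℝ {(0 : ℝ × ℝ), x₀, y₀}) := by
  -- 0 is an interior point
  obtain ⟨z, hz⟩ := hint
  have hzneg : -z ∈ interior C := by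
    rw [hsymm]
    have h := (Homeomorph.neg (ℝ × ℝ)).image_interior C
    have e : ⇑(Homeomorph.neg (ℝ × ℝ)) = fun x => -x := rfl
    rw [e] at h
    simp only [Set.image_neg_eq_neg] at h
    rw [← h]
    exact Set.neg_mem_neg.2 hz
  have h0 : (0 : ℝ × ℝ) ∈ interior C := by
    have := hconv.interior hz hzneg (by norm_num : (0:ℝ) ≤ 1/2)
      (by norm_num : (0:ℝ) ≤ 1/2) (by norm_num)
    simpa using this
  obtain ⟨ε, hε, hball⟩ := Metric.mem_nhds_iff.1 (isOpen_interior.mem_nhds h0)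
  have hCsub : interior C ⊆ C := interior_subset
  have hu : ((ε/2, 0) : ℝ × ℝ) ∈ C := by
    apply hCsub; apply hball
    simp [Prod.norm_def, abs_of_pos hε, abs_of_nonneg (le_of_lt (half_pos hε))]
    linarith
  have hv : ((0, ε/2) : ℝ × ℝ) ∈ C := by
    apply hCsub; apply hball
    simp [Prod.norm_def, abs_of_pos hε, abs_of_nonneg (le_of_lt (half_pos hε))]
    linarith
  -- maximize |det|
  set f : (ℝ × ℝ) × (ℝ × ℝ) → ℝ := fun q => |q.1.1 * q.2.2 - q.2.1 * q.1.2| with hf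
  have hfc : Continuous f := by fun_prop
  obtain ⟨⟨x₀, y₀⟩, hmem, hmax⟩ :=
    (hC.prod hC).exists_isMaxOn ⟨((ε/2,0), (0,ε/2)), Set.mk_mem_prod hu hv⟩
      hfc.continuousOn
  have hmax' : ∀ q ∈ C ×ˢ C, f q ≤ f (x₀, y₀) := fun q hq => hmax hq
  have hx₀C : x₀ ∈ C := hmem.1
  have hy₀C : y₀ ∈ C := hmem.2
  set d : ℝ := x₀.1 * y₀.2 - y₀.1 * x₀.2 with hdd
  have hdpos : 0 < |d| := by
    have := hmax' _ (Set.mk_mem_prod hu hv)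
    have hval : f ((ε/2,0), (0,ε/2)) = ε/2 * (ε/2) := by
      simp [hf, abs_of_nonneg (le_of_lt (mul_pos (half_pos hε) (half_pos hε)))]
    have : ε/2 * (ε/2) ≤ |d| := by rw [← hval]; exact this
    nlinarith
  have hdne : d ≠ 0 := fun h => by simp [h] at hdpos
  -- maximizers are on the frontier
  have hCclosed := hC.isClosed
  have hfr : frontier C = C \ interior C := by
    rw [frontier, hCclosed.closure_eq]
  have hx₀fr : x₀ ∈ frontier C := by
    rw [hfr]
    refine ⟨hx₀C, fun hxin => ?_⟩
    have hcont : ContinuousAt (fun t : ℝ => t • x₀) 1 := by fun_prop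
    have hev : ∀ᶠ t : ℝ in nhds 1, t • x₀ ∈ interior C := by
      apply hcont.eventually_mem (isOpen_interior.mem_nhds ?_)
      simpa using hxin
    obtain ⟨t, htmem, ht1⟩ :=
      ((hev.filter_mono nhdsWithin_le_nhds).and
        (eventually_mem_nhdsWithin (a := (1:ℝ)) (s := Set.Ioi 1))).exists
    have htC : t • x₀ ∈ C := hCsub htmem
    have hle := hmax' _ (Set.mk_mem_prod htC hy₀C)
    have : f (t • x₀, y₀) = t * |d| := by
      simp only [hf, Prod.smul_fst, Prod.smul_snd, smul_eq_mul]
      rw [show t * x₀.1 * y₀.2 - y₀.1 * (t * x₀.2) = t * d by rw [hdd]; ring,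
        abs_mul, abs_of_pos (lt_trans one_pos ht1)]
    rw [this] at hle
    nlinarith [Set.mem_Ioi.1 ht1]
  have hy₀fr : y₀ ∈ frontier C := by
    rw [hfr]
    refine ⟨hy₀C, fun hyin => ?_⟩
    have hcont : ContinuousAt (fun t : ℝ => t • y₀) 1 := by fun_prop
    have hev : ∀ᶠ t : ℝ in nhds 1, t • y₀ ∈ interior C := by
      apply hcont.eventually_mem (isOpen_interior.mem_nhds ?_)
      simpa using hyin
    obtain ⟨t, htmem, ht1⟩ :=
      ((hev.filter_mono nhdsWithin_le_nhds).and
        (eventually_mem_nhdsWithin (a := (1:ℝ)) (s := Set.Ioi 1))).exists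
    have htC : t • y₀ ∈ C := hCsub htmem
    have hle := hmax' _ (Set.mk_mem_prod hx₀C htC)
    have : f (x₀, t • y₀) = t * |d| := by
      simp only [hf, Prod.smul_fst, Prod.smul_snd, smul_eq_mul]
      rw [show x₀.1 * (t * y₀.2) - t * y₀.1 * x₀.2 = t * d by rw [hdd]; ring,
        abs_mul, abs_of_pos (lt_trans one_pos ht1)]
    rw [this] at hle
    nlinarith [Set.mem_Ioi.1 ht1]
  refine ⟨x₀, hx₀fr, y₀, hy₀fr, ?_, ?_, ?_⟩
  · -- linear independence
    rw [LinearIndependent.pair_iff]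
    intro s t hst
    have h1 : s * x₀.1 + t * y₀.1 = 0 := congrArg Prod.fst hst
    have h2 : s * x₀.2 + t * y₀.2 = 0 := congrArg Prod.snd hst
    constructor
    · have : s * d = 0 := by rw [hdd]; linear_combination y₀.2 * h1 - y₀.1 * h2
      exact (mul_eq_zero.1 this).resolve_right hdne
    · have : t * d = 0 := by rw [hdd]; linear_combination (-x₀.2) * h1 + x₀.1 * h2
      exact (mul_eq_zero.1 this).resolve_right hdne
  · -- parallelogram
    intro p hp
    refine ⟨(p.1 * y₀.2 - y₀.1 * p.2) / d, (x₀.1 * p.2 - p.1 * x₀.2) / d, ?_, ?_, ?_⟩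
    · have := hmax' _ (Set.mk_mem_prod hp hy₀C)
      rw [abs_div, div_le_one hdpos]
      exact this
    · have := hmax' _ (Set.mk_mem_prod hx₀C hp)
      rw [abs_div, div_le_one hdpos]
      exact this
    · rw [Prod.ext_iff]
      simp only [Prod.fst_add, Prod.snd_add, Prod.smul_fst, Prod.smul_snd, smul_eq_mul]
      constructor
      · field_simp
        rw [hdd]; ring
      · field_simp
        rw [hdd]; ring
  · -- maximal area
    intro x hx y hy
    have hxC : x ∈ C := by rw [hfr] at hx; exact hx.1
    have hyC : y ∈ C := by rw [hfr] at hy; exact hy.1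
    rw [triangle_vol x y, triangle_vol x₀ y₀]
    exact mul_le_mul_left (ENNReal.ofReal_le_ofReal
      (hmax' _ (Set.mk_mem_prod hxC hyC))) _
end

section
/- For any symmetric convex body C in ℝ², there exists an invertible linear map T such that conv{(±1,0),(0,±1)} ⊆ T(C) ⊆ [−1,1]². -/
/-- For any symmetric convex body `C` in the plane there is an invertible linear map `T`
with `conv{(±1,0),(0,±1)} ⊆ T(C) ⊆ [-1,1]²`. -/
theorem exists_linear_map_between_cross_polytope_and_cube (C : Set (ℝ × ℝ))
    (hC : IsCompact C) (hconv : Convex ℝ C) (hint : (interior C).Nonempty)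
    (hsymm : C = -C) :
    ∃ T : (ℝ × ℝ) ≃ₗ[ℝ] (ℝ × ℝ),
      convexHull ℝ {((1 : ℝ), (0 : ℝ)), (-1, 0), (0, 1), (0, -1)} ⊆ T '' C ∧
      T '' C ⊆ {p : ℝ × ℝ | |p.1| ≤ 1 ∧ |p.2| ≤ 1} := by
  -- C is symmetric: membership flips
  have hmemneg : ∀ z : ℝ × ℝ, z ∈ C → -z ∈ C := by
    intro z hz
    rw [hsymm]
    exact Set.neg_mem_neg.mpr hz
  -- find a ball around 0 inside C
  obtain ⟨x, hx⟩ := hint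
  obtain ⟨ε, εpos, hball⟩ := Metric.isOpen_iff.mp isOpen_interior x hx
  have hballC : Metric.ball x ε ⊆ C := hball.trans interior_subset
  have hball0 : Metric.ball (0 : ℝ × ℝ) ε ⊆ C := by
    intro y hy
    have hy' : ‖y‖ < ε := by simpa [Metric.mem_ball, dist_eq_norm] using hy
    have h1 : x + y ∈ C := hballC (by simp [Metric.mem_ball, dist_eq_norm, hy'])
    have h2 : y - x ∈ C := by
      have hxy : x - y ∈ C := hballC (by simp [Metric.mem_ball, dist_eq_norm, norm_sub_rev, hy'])
      have := hmemneg _ hxy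
      rwa [neg_sub] at this
    have := hconv h1 h2 (by norm_num : (0:ℝ) ≤ 1/2) (by norm_num : (0:ℝ) ≤ 1/2) (by norm_num)
    have heq : (1/2 : ℝ) • (x + y) + (1/2 : ℝ) • (y - x) = y := by module
    rwa [heq] at this
  set a : ℝ × ℝ := (ε/2, 0) with ha
  set b : ℝ × ℝ := (0, ε/2) with hb
  have haC : a ∈ C := hball0 (by
    simp [Metric.mem_ball, dist_eq_norm, ha, Prod.norm_def, abs_of_pos, εpos])
  have hbC : b ∈ C := hball0 (by
    simp [Metric.mem_ball, dist_eq_norm, hb, Prod.norm_def, abs_of_pos, εpos])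
  -- maximize |det|
  set f : (ℝ × ℝ) × (ℝ × ℝ) → ℝ := fun p => |p.1.1 * p.2.2 - p.1.2 * p.2.1| with hf
  have hfc : Continuous f := by fun_prop
  obtain ⟨⟨u, v⟩, huv, hmax⟩ := (hC.prod hC).exists_isMaxOn
    ⟨(a, b), Set.mk_mem_prod haC hbC⟩ hfc.continuousOn
  have huC : u ∈ C := huv.1
  have hvC : v ∈ C := huv.2
  set d : ℝ := u.1 * v.2 - u.2 * v.1 with hdd
  have habpos : f (a, b) = ε/2 * (ε/2) := by
    simp [hf, ha, hb, abs_of_pos (by positivity : (0:ℝ) < ε/2 * (ε/2))]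
  have hdabs : ε/2 * (ε/2) ≤ |d| := by
    have : f (a, b) ≤ f (u, v) := hmax (Set.mk_mem_prod haC hbC)
    rw [habpos] at this
    simpa [hf, hdd] using this
  have hd : d ≠ 0 := by
    intro h
    rw [h] at hdabs
    simp at hdabs
    nlinarith
  have hdpos : (0:ℝ) < |d| := abs_pos.mpr hd
  -- construct the linear equivalence
  set T : (ℝ × ℝ) ≃ₗ[ℝ] (ℝ × ℝ) :=
    { toFun := fun p => ((p.1 * v.2 - p.2 * v.1) / d, (u.1 * p.2 - u.2 * p.1) / d)
      invFun := fun q => (q.1 * u.1 + q.2 * v.1, q.1 * u.2 + q.2 * v.2)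
      map_add' := by
        intro p q
        rw [Prod.mk.injEq]
        refine ⟨?_, ?_⟩ <;> simp [Prod.fst_add, Prod.snd_add] <;> ring
      map_smul' := by
        intro c p
        rw [Prod.mk.injEq]
        refine ⟨?_, ?_⟩ <;> simp [Prod.smul_def, smul_eq_mul] <;> ring
      left_inv := by
        intro p
        rw [Prod.mk.injEq]
        refine ⟨?_, ?_⟩ <;> field_simp <;> ring
      right_inv := by
        intro q
        rw [Prod.mk.injEq]
        refine ⟨?_, ?_⟩ <;> field_simp <;> ring } with hT
  have hTapp : ∀ p : ℝ × ℝ, T p = ((p.1 * v.2 - p.2 * v.1) / d, (u.1 * p.2 - u.2 * p.1) / d) :=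
    fun p => rfl
  refine ⟨T, ?_, ?_⟩
  · -- cross polytope ⊆ image
    apply convexHull_min
    · intro p hp
      simp only [Set.mem_insert_iff, Set.mem_singleton_iff] at hp
      rcases hp with rfl | rfl | rfl | rfl
      · refine ⟨u, huC, ?_⟩
        rw [hTapp, Prod.mk.injEq]
        refine ⟨?_, ?_⟩ <;> (try simp only [Prod.fst_neg, Prod.snd_neg]) <;> field_simp <;>
          first | ring | (rw [hdd]; ring)
      · refine ⟨-u, hmemneg _ huC, ?_⟩
        rw [hTapp, Prod.mk.injEq]
        refine ⟨?_, ?_⟩ <;> (try simp only [Prod.fst_neg, Prod.snd_neg]) <;> field_simp <;>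
          first | ring | (rw [hdd]; ring)
      · refine ⟨v, hvC, ?_⟩
        rw [hTapp, Prod.mk.injEq]
        refine ⟨?_, ?_⟩ <;> (try simp only [Prod.fst_neg, Prod.snd_neg]) <;> field_simp <;>
          first | ring | (rw [hdd]; ring)
      · refine ⟨-v, hmemneg _ hvC, ?_⟩
        rw [hTapp, Prod.mk.injEq]
        refine ⟨?_, ?_⟩ <;> (try simp only [Prod.fst_neg, Prod.snd_neg]) <;> field_simp <;>
          first | ring | (rw [hdd]; ring)
    · exact hconv.linear_image (T : (ℝ × ℝ) →ₗ[ℝ] (ℝ × ℝ))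
  · -- image ⊆ cube
    rintro q ⟨p, hp, rfl⟩
    rw [hTapp]
    constructor
    · have h1 : |p.1 * v.2 - p.2 * v.1| ≤ |d| := hmax (Set.mk_mem_prod hp hvC)
      simpa [abs_div, div_le_one hdpos] using h1
    · have h2 : |u.1 * p.2 - u.2 * p.1| ≤ |d| := hmax (Set.mk_mem_prod huC hp)
      simpa [abs_div, div_le_one hdpos] using h2
end

section
/- Let P be a convex cone in a normed space with P ∩ (−P) = {0}, and suppose that for all a, b ∈ P with ‖a‖ = ‖b‖ = 1 we have ‖a − b‖ < 1. Then for all distinct x, y ∈ P with ‖x‖ = ‖y‖, we have y − x ∉ P. -/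
/-- If `P` is a convex cone with `P ∩ (-P) = {0}` in a normed space such that any two unit
vectors in `P` are at distance less than 1, then distinct elements of `P` of equal norm are
incomparable: `y - x ∉ P`. -/
theorem cone_incomparable_of_unit_dist_lt_one {E : Type*} [NormedAddCommGroup E]
    [NormedSpace ℝ E] (P : Set E) (hconv : Convex ℝ P)
    (hsmul : ∀ x ∈ P, ∀ t : ℝ, 0 ≤ t → t • x ∈ P)
    (hpointed : P ∩ (-P) = {0})
    (hunit : ∀ a ∈ P, ∀ b ∈ P, ‖a‖ = 1 → ‖b‖ = 1 → ‖a - b‖ < 1) :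
    ∀ x ∈ P, ∀ y ∈ P, x ≠ y → ‖x‖ = ‖y‖ → y - x ∉ P := by
  intro x hx y hy hxy hnorm hz
  set z : E := y - x with hzdef
  have hzne : z ≠ 0 := sub_ne_zero.mpr (Ne.symm hxy)
  have hγpos : 0 < ‖z‖ := norm_pos_iff.mpr hzne
  have hrpos : 0 < ‖x‖ := by
    rcases (norm_nonneg x).lt_or_eq with h | h
    · exact h
    · exfalso
      have hx0 : x = 0 := norm_eq_zero.mp h.symm
      have hy0 : y = 0 := norm_eq_zero.mp (by rw [← hnorm, ← h])
      exact hxy (hx0.trans hy0.symm)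
  set u : E := (‖x‖⁻¹) • x with hu_def
  set c : E := (‖z‖⁻¹) • z with hc_def
  have hu : u ∈ P := hsmul x hx _ (by positivity)
  have hc : c ∈ P := hsmul z hz _ (by positivity)
  have hun : ‖u‖ = 1 := by
    rw [hu_def, norm_smul, norm_inv, norm_norm, inv_mul_cancel₀ hrpos.ne']
  have hcn : ‖c‖ = 1 := by
    rw [hc_def, norm_smul, norm_inv, norm_norm, inv_mul_cancel₀ hγpos.ne']
  have hlt : ‖u - c‖ < 1 := hunit u hu c hc hun hcn
  set β : ℝ := ‖z‖ / ‖x‖ with hβ_def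
  have hβpos : 0 < β := div_pos hγpos hrpos
  have hkey : β • (u - c) = (1 + β) • u - (‖x‖⁻¹) • y := by
    have hy' : y = x + z := by rw [hzdef]; abel
    rw [hu_def, hc_def, hy', hβ_def]
    match_scalars <;> field_simp <;> ring
  have hge : β ≤ β * ‖u - c‖ := by
    have h1 : β * ‖u - c‖ = ‖β • (u - c)‖ := by
      rw [norm_smul, Real.norm_eq_abs, abs_of_pos hβpos]
    rw [h1, hkey]
    have h2 : ‖(1 + β) • u‖ - ‖(‖x‖⁻¹) • y‖ ≤ ‖(1 + β) • u - (‖x‖⁻¹) • y‖ :=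
      norm_sub_norm_le _ _
    have h3 : ‖(1 + β) • u‖ = 1 + β := by
      rw [norm_smul, Real.norm_eq_abs, abs_of_pos (by linarith), hun, mul_one]
    have h4 : ‖(‖x‖⁻¹) • y‖ = 1 := by
      rw [norm_smul, norm_inv, norm_norm, hnorm, inv_mul_cancel₀ (by rw [← hnorm]; exact hrpos.ne')]
    rw [h3, h4] at h2
    linarith
  nlinarith [hge, mul_lt_mul_of_pos_left hlt hβpos]
end

section
/- Let c be a unit vector in a normed space and let P be the set of all finite nonnegative combinations Σ λ_j x_j where each x_j is a unit vector with ‖c − x_j‖ < 1/5. Then every element of P with norm 1 satisfies ‖c − p‖ < 1/2. -/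
/-- Let `c` be a unit vector and `P` the cone generated by the unit vectors within `1/5`
of `c`. Then every element of `P` of norm `1` is within `1/2` of `c`. -/
theorem norm_one_elem_of_generated_cone_close {E : Type*} [NormedAddCommGroup E]
    [NormedSpace ℝ E] (c : E) (hc : ‖c‖ = 1) (p : E)
    (hp : ∃ (n : ℕ) (lam : Fin n → ℝ) (x : Fin n → E),
      (∀ j, 0 ≤ lam j) ∧ (∀ j, ‖x j‖ = 1 ∧ ‖c - x j‖ < 1 / 5) ∧
      p = ∑ j, lam j • x j)
    (hnorm : ‖p‖ = 1) : ‖c - p‖ < 1 / 2 := by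
  obtain ⟨n, lam, x, hlam, hx, hpdef⟩ := hp
  set L := ∑ j, lam j with hL
  have hL0 : 0 ≤ L := Finset.sum_nonneg fun j _ => hlam j
  have hLpos : 0 < L := by
    rcases hL0.lt_or_eq with h | h
    · exact h
    · exfalso
      have hz : ∀ j, lam j = 0 := by
        intro j
        have h1 := Finset.single_le_sum (f := lam) (fun j _ => hlam j) (Finset.mem_univ j)
        have := hlam j
        rw [← hL] at h1
        linarith
      simp [hpdef, hz] at hnorm
  have hd : ‖p - L • c‖ < L / 5 := by
    have heq : p - L • c = ∑ j, lam j • (x j - c) := by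
      simp [hpdef, smul_sub, Finset.sum_sub_distrib, hL, Finset.sum_smul]
    rw [heq]
    have hjex : ∃ j : Fin n, 0 < lam j := by
      by_contra h
      push_neg at h
      have hz : ∀ j, lam j = 0 := fun j => le_antisymm (h j) (hlam j)
      simp [hL, hz] at hLpos
    obtain ⟨j0, hj0⟩ := hjex
    calc ‖∑ j, lam j • (x j - c)‖ ≤ ∑ j, lam j * ‖x j - c‖ := by
          refine (norm_sum_le _ _).trans_eq ?_
          simp [norm_smul, abs_of_nonneg (hlam _)]
      _ < ∑ j, lam j * (1/5) := by
          refine Finset.sum_lt_sum (fun i _ => ?_) ⟨j0, Finset.mem_univ j0, ?_⟩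
          · have := (hx i).2
            rw [norm_sub_rev] at this
            nlinarith [hlam i, this]
          · have := (hx j0).2
            rw [norm_sub_rev] at this
            nlinarith
      _ = L / 5 := by rw [← Finset.sum_mul]; ring
  have hLc : ‖L • c‖ = L := by
    rw [norm_smul, hc, Real.norm_eq_abs, abs_of_nonneg hL0, mul_one]
  have hup : L < 5/4 := by
    have h1 : ‖L • c‖ ≤ ‖p‖ + ‖p - L • c‖ := by
      have := norm_sub_le p (p - L • c)
      simpa using this
    rw [hLc, hnorm] at h1
    linarith
  have hlo : 5/6 < L := by
    have h1 : ‖p‖ ≤ ‖L • c‖ + ‖p - L • c‖ := by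
      have := norm_add_le (L • c) (p - L • c)
      simpa using this
    rw [hLc, hnorm] at h1
    linarith
  have habs : ‖c - L • c‖ = |1 - L| := by
    have : c - L • c = (1 - L) • c := by
      rw [sub_smul, one_smul]
    rw [this, norm_smul, hc, mul_one, Real.norm_eq_abs]
  have hfinal : ‖c - p‖ ≤ |1 - L| + ‖p - L • c‖ := by
    calc ‖c - p‖ ≤ ‖c - L • c‖ + ‖L • c - p‖ := norm_sub_le_norm_sub_add_norm_sub c (L • c) p
      _ = |1 - L| + ‖p - L • c‖ := by rw [habs, norm_sub_rev]
  rcases abs_cases (1 - L) with ⟨h, _⟩ | ⟨h, _⟩ <;> rw [h] at hfinal <;> linarith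
end

section
/- In a d-dimensional normed real vector space, if C = {c_1,…,c_m} is a set of unit vectors with ‖c_i − c_j‖ ≥ 1/5 and ‖c_i + c_j‖ ≥ 1/5 for all i < j, then m ≤ (11^d − 9^d)/2. -/
open Metric MeasureTheory Set
open scoped ENNReal

/-- In a `d`-dimensional real normed space, a family of `m` unit vectors that are pairwise
`1/5`-separated (both `‖cᵢ - cⱼ‖ ≥ 1/5` and `‖cᵢ + cⱼ‖ ≥ 1/5`) satisfies
`m ≤ (11^d - 9^d)/2`. -/
theorem separated_unit_vectors_card_le {E : Type*} [NormedAddCommGroup E]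
    [NormedSpace ℝ E] [FiniteDimensional ℝ E] (d m : ℕ) (hd : Module.finrank ℝ E = d)
    (c : Fin m → E) (hunit : ∀ i, ‖c i‖ = 1)
    (hsep : ∀ i j : Fin m, i < j → 1 / 5 ≤ ‖c i - c j‖ ∧ 1 / 5 ≤ ‖c i + c j‖) :
    m ≤ (11 ^ d - 9 ^ d) / 2 := by
  classical
  rcases Nat.eq_zero_or_pos m with rfl | hm
  · exact Nat.zero_le _
  borelize E
  set μ : Measure E := Measure.addHaar with hμ
  set V : ℝ≥0∞ := μ (ball (0 : E) 1) with hV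
  -- symmetric separation
  have hsep' : ∀ i j : Fin m, i ≠ j → 1 / 5 ≤ ‖c i - c j‖ ∧ 1 / 5 ≤ ‖c i + c j‖ := by
    intro i j hij
    rcases lt_or_gt_of_ne hij with h | h
    · exact hsep i j h
    · obtain ⟨h1, h2⟩ := hsep j i h
      exact ⟨by rwa [norm_sub_rev], by rwa [add_comm]⟩
  -- the centers
  set f : Fin m × Bool → E := fun p => if p.2 then c p.1 else -c p.1 with hf
  have hfnorm : ∀ p, ‖f p‖ = 1 := by
    rintro ⟨i, b⟩
    cases b <;> simp [hf, hunit]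
  have hft : ∀ i, f (i, true) = c i := fun i => by simp [hf]
  have hff : ∀ i, f (i, false) = -c i := fun i => by simp [hf]
  have hdist : ∀ p q : Fin m × Bool, p ≠ q → 1 / 5 ≤ dist (f p) (f q) := by
    rintro ⟨i, b⟩ ⟨j, b'⟩ hpq
    have h2 : (1:ℝ)/5 ≤ ‖c i + c i‖ := by
      rw [← two_smul ℝ, norm_smul, hunit]; norm_num
    by_cases hij : i = j
    · subst hij
      cases b <;> cases b'
      · exact absurd rfl hpq
      · rw [dist_eq_norm, hff, hft, show -c i - c i = -(c i + c i) by abel, norm_neg]; exact h2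
      · rw [dist_eq_norm, hft, hff, sub_neg_eq_add]; exact h2
      · exact absurd rfl hpq
    · obtain ⟨h1', h2'⟩ := hsep' i j hij
      cases b <;> cases b'
      · rw [dist_eq_norm, hff, hff, show -c i - -c j = -(c i - c j) by abel, norm_neg]; exact h1'
      · rw [dist_eq_norm, hff, hft, show -c i - c j = -(c i + c j) by abel, norm_neg]; exact h2'
      · rw [dist_eq_norm, hft, hff, sub_neg_eq_add]; exact h2'
      · rw [dist_eq_norm, hft, hft]; exact h1'
  -- the family of disjoint open sets
  set g : Option (Fin m × Bool) → Set E := fun o =>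
    Option.elim o (ball (0 : E) (9 / 10)) (fun p => ball (f p) (1 / 10)) with hg
  have hdisj : Pairwise (Function.onFun Disjoint g) := by
    rintro (_ | p) (_ | q) hne
    · exact absurd rfl hne
    · refine ball_disjoint_ball ?_
      rw [dist_comm, dist_zero_right, hfnorm]; norm_num
    · refine ball_disjoint_ball ?_
      rw [dist_zero_right, hfnorm]; norm_num
    · refine ball_disjoint_ball ?_
      have : p ≠ q := fun h => hne (by rw [h])
      have := hdist p q this
      linarith
  have hmeas : ∀ o, MeasurableSet (g o) := by
    rintro (_ | p) <;> exact measurableSet_ball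
  have hsubset : (⋃ o, g o) ⊆ closedBall (0 : E) (11 / 10) := by
    rintro x hx
    simp only [mem_iUnion] at hx
    obtain ⟨o, ho⟩ := hx
    rcases o with _ | p
    · exact closedBall_subset_closedBall (by norm_num) (ball_subset_closedBall ho)
    · have : closedBall (f p) (1 / 10) ⊆ closedBall (0 : E) (11 / 10) := by
        apply closedBall_subset_closedBall'
        rw [dist_zero_right, hfnorm]; norm_num
      exact this (ball_subset_closedBall ho)
  -- measure computation
  have hsum : ∑' o, μ (g o) ≤ μ (closedBall (0 : E) (11 / 10)) := by
    rw [← measure_iUnion hdisj hmeas]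
    exact measure_mono hsubset
  have hball : ∀ p : Fin m × Bool, μ (g (some p)) = ENNReal.ofReal ((1 / 10 : ℝ) ^ d) * V := by
    intro p
    show μ (ball (f p) (1 / 10)) = _
    rw [Measure.addHaar_ball_of_pos μ _ (by norm_num : (0:ℝ) < 1 / 10), hd]
  have hnone : μ (g none) = ENNReal.ofReal ((9 / 10 : ℝ) ^ d) * V := by
    show μ (ball (0 : E) (9 / 10)) = _
    rw [Measure.addHaar_ball_of_pos μ _ (by norm_num : (0:ℝ) < 9 / 10), hd]
  have hbig : μ (closedBall (0 : E) (11 / 10)) = ENNReal.ofReal ((11 / 10 : ℝ) ^ d) * V := by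
    rw [Measure.addHaar_closedBall μ _ (by norm_num : (0:ℝ) ≤ 11 / 10), hd]
  have hsum2 : ∑' o, μ (g o)
      = ENNReal.ofReal ((9 / 10 : ℝ) ^ d) * V
        + (m * 2 : ℕ) * (ENNReal.ofReal ((1 / 10 : ℝ) ^ d) * V) := by
    rw [tsum_fintype, Fintype.sum_option, hnone]
    congr 1
    rw [Finset.sum_congr rfl (fun p _ => hball p), Finset.sum_const, Finset.card_univ]
    simp [Fintype.card_prod, nsmul_eq_mul]
  have key : ENNReal.ofReal ((9 / 10 : ℝ) ^ d) + (m * 2 : ℕ) * ENNReal.ofReal ((1 / 10 : ℝ) ^ d)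
      ≤ ENNReal.ofReal ((11 / 10 : ℝ) ^ d) := by
    have hV0 : V ≠ 0 := (measure_ball_pos μ 0 (by norm_num)).ne'
    have hVt : V ≠ ⊤ := measure_ball_lt_top.ne
    rw [← ENNReal.mul_le_mul_iff_left hV0 hVt, add_mul, mul_assoc]
    calc ENNReal.ofReal ((9 / 10 : ℝ) ^ d) * V
          + (m * 2 : ℕ) * (ENNReal.ofReal ((1 / 10 : ℝ) ^ d) * V)
        = ∑' o, μ (g o) := hsum2.symm
      _ ≤ μ (closedBall (0 : E) (11 / 10)) := hsum
      _ = ENNReal.ofReal ((11 / 10 : ℝ) ^ d) * V := hbig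
  have keyR : (9 / 10 : ℝ) ^ d + (m * 2 : ℕ) * (1 / 10 : ℝ) ^ d ≤ (11 / 10 : ℝ) ^ d := by
    have h1 : ((m * 2 : ℕ) : ℝ≥0∞) * ENNReal.ofReal ((1 / 10 : ℝ) ^ d)
        = ENNReal.ofReal (((m * 2 : ℕ) : ℝ) * (1 / 10 : ℝ) ^ d) := by
      rw [ENNReal.ofReal_mul (by positivity), ENNReal.ofReal_natCast]
    rw [h1, ← ENNReal.ofReal_add (by positivity) (by positivity)] at key
    exact (ENNReal.ofReal_le_ofReal_iff (by positivity)).mp key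
  have hnat : 9 ^ d + m * 2 ≤ 11 ^ d := by
    have h10 : (0:ℝ) < 10 ^ d := by positivity
    have e1 : (9 / 10 : ℝ) ^ d + ((m * 2 : ℕ) : ℝ) * (1 / 10 : ℝ) ^ d
        = ((9:ℝ) ^ d + (m * 2 : ℕ)) / 10 ^ d := by
      rw [div_pow, div_pow, one_pow]
      field_simp
    have e2 : (11 / 10 : ℝ) ^ d = (11:ℝ) ^ d / 10 ^ d := by rw [div_pow]
    rw [e1, e2, div_le_div_iff₀ h10 h10] at keyR
    have : (9:ℝ) ^ d + ((m * 2 : ℕ) : ℝ) ≤ (11:ℝ) ^ d := by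
      nlinarith [keyR, h10]
    exact_mod_cast this
  have h2 : m * 2 ≤ 11 ^ d - 9 ^ d := by omega
  exact (Nat.le_div_iff_mul_le (by norm_num)).mpr h2
end

section
/- Suppose {P_i : i ∈ I} is a finite family of convex cones in a d-dimensional normed space such that (a) ⋃_{i∈I} (P_i ∪ −P_i) = ℝ^d, and (b) for each i and all distinct x, y ∈ P_i with ‖x‖ = ‖y‖, neither x − y nor y − x lies in P_i. Then any k-distance set in the space has cardinality at most (k+1)^{|I|}. -/
/-- If a finite family of convex cones `P i` in a `d`-dimensional normed space covers the
space (together with their negatives) and distinct equal-norm elements of each cone are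
incomparable in that cone, then any `k`-distance set has at most `(k+1)^|I|` points. -/
theorem kDistanceSet_card_le_of_cones {E : Type*} [NormedAddCommGroup E]
    [NormedSpace ℝ E] [FiniteDimensional ℝ E] (d : ℕ) (hd : Module.finrank ℝ E = d)
    {I : Type*} [Fintype I] (P : I → Set E)
    (hconv : ∀ i, Convex ℝ (P i))
    (hsmul : ∀ i, ∀ x ∈ P i, ∀ t : ℝ, 0 ≤ t → t • x ∈ P i)
    (hpointed : ∀ i, P i ∩ (-(P i)) = {0})
    (hcover : (⋃ i, P i ∪ (-(P i))) = Set.univ)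
    (hincomp : ∀ i, ∀ x ∈ P i, ∀ y ∈ P i, x ≠ y → ‖x‖ = ‖y‖ →
      x - y ∉ P i ∧ y - x ∉ P i)
    (k : ℕ) (S : Set E)
    (hk : {r : ℝ | ∃ x ∈ S, ∃ y ∈ S, x ≠ y ∧ dist x y = r}.encard = k) :
    S.encard ≤ ((k + 1) ^ Fintype.card I : ℕ) := by
  classical
  set D : Set ℝ := {r : ℝ | ∃ x ∈ S, ∃ y ∈ S, x ≠ y ∧ dist x y = r} with hDdef
  have hDfin : D.Finite := by
    rw [← Set.encard_lt_top_iff, hk]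
    exact ENat.coe_lt_top k
  have hDfintype : Fintype ↥D := hDfin.fintype
  have hDcard : Fintype.card ↥D = k := by
    rw [← Nat.card_eq_fintype_card, Nat.card_coe_set_eq, Set.ncard_def, hk]
    rfl
  -- cone facts
  have addmem : ∀ i, ∀ a ∈ P i, ∀ b ∈ P i, a + b ∈ P i := by
    intro i a ha b hb
    have h2 : (2:ℝ) • ((1/2 : ℝ) • a + (1/2 : ℝ) • b) ∈ P i := by
      refine hsmul i _ ?_ 2 (by norm_num)
      exact hconv i ha hb (by norm_num) (by norm_num) (by norm_num)
    rw [smul_add, smul_smul, smul_smul] at h2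
    norm_num at h2
    exact h2
  have nzmem : ∀ i, ∀ a ∈ P i, ∀ b ∈ P i, a ≠ 0 → a + b ≠ 0 := by
    intro i a ha b hb ha0 h
    apply ha0
    have hb' : -a ∈ P i := by
      have : b = -a := by linear_combination (norm := abel) h
      rwa [this] at hb
    have : a ∈ P i ∩ (-(P i)) := ⟨ha, by rwa [Set.mem_neg]⟩
    rw [hpointed i] at this
    exact this
  -- the step relation and chains
  let r : I → E → E → Prop := fun i x y => y - x ∈ P i ∧ y - x ≠ 0
  let ch : I → ℕ → E → Prop := fun i n x =>
    ∃ c : ℕ → E, c n = x ∧ (∀ j, j < n → c j ∈ S) ∧ ∀ j, j < n → r i (c j) (c (j+1))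
  -- pairwise differences along a chain
  have pair : ∀ i (c : ℕ → E) (n : ℕ), (∀ j, j < n → r i (c j) (c (j+1))) →
      ∀ m, m ≤ n → ∀ j, j < m → c m - c j ∈ P i ∧ c m - c j ≠ 0 := by
    intro i c n hc m
    induction m with
    | zero => intro _ j hj; exact absurd hj (by omega)
    | succ m ih =>
      intro hm j hj
      have hstep := hc m (by omega)
      rcases Nat.lt_or_ge j m with h | h
      · obtain ⟨h1, h2⟩ := ih (by omega) j h
        refine ⟨?_, ?_⟩
        · have := addmem i _ hstep.1 _ h1
          rwa [sub_add_sub_cancel] at this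
        · have := nzmem i _ hstep.1 _ h1 hstep.2
          rwa [sub_add_sub_cancel] at this
      · have hjm : j = m := by omega
        subst hjm
        exact hstep
  -- chains ending at points of S have length at most k
  have chain_le : ∀ i x, x ∈ S → ∀ n, ch i n x → n ≤ k := by
    rintro i x hx n ⟨c, hcn, hcS, hcr⟩
    have key : ∀ j, j < n → (x - c j ∈ P i ∧ x - c j ≠ 0) := by
      intro j hj
      have := pair i c n hcr n le_rfl j hj
      rwa [hcn] at this
    have hcxne : ∀ j, j < n → c j ≠ x := by
      intro j hj h
      exact (key j hj).2 (by rw [h, sub_self])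
    let F : Fin n → ↥D := fun j => ⟨dist (c j) x, ⟨c j, hcS j j.2, x, hx, hcxne j j.2, rfl⟩⟩
    have hlt : ∀ a b : Fin n, (a:ℕ) < (b:ℕ) → dist (c a) x ≠ dist (c b) x := by
      intro a b hab hd
      have h1 := key a a.2
      have h2 := key b b.2
      have hnorm : ‖x - c a‖ = ‖x - c b‖ := by
        rw [dist_eq_norm, dist_eq_norm] at hd
        rw [norm_sub_rev x (c a), norm_sub_rev x (c b)]
        exact hd
      have hpp := pair i c n hcr b b.2.le a hab
      have hne2 : x - c (a:ℕ) ≠ x - c (b:ℕ) := by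
        intro h
        apply hpp.2
        have hca : c (a:ℕ) = c (b:ℕ) := sub_right_injective h
        rw [hca, sub_self]
      have := (hincomp i _ h1.1 _ h2.1 hne2 hnorm).1
      apply this
      have h3 := hpp.1
      have he : x - c (a:ℕ) - (x - c (b:ℕ)) = c (b:ℕ) - c (a:ℕ) := by abel
      rw [he]
      exact h3
    have hFinj : Function.Injective F := by
      intro a b hab
      have hd : dist (c (a:ℕ)) x = dist (c (b:ℕ)) x := congrArg Subtype.val hab
      by_contra hne
      rcases lt_trichotomy (a:ℕ) (b:ℕ) with h | h | h
      · exact hlt a b h hd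
      · exact hne (Fin.ext h)
      · exact hlt b a h hd.symm
    calc n = Fintype.card (Fin n) := (Fintype.card_fin n).symm
      _ ≤ Fintype.card ↥D := Fintype.card_le_of_injective F hFinj
      _ = k := hDcard
  -- trivial chain
  have ch0 : ∀ i x, ch i 0 x :=
    fun i x => ⟨fun _ => x, rfl, fun j hj => absurd hj (by omega),
      fun j hj => absurd hj (by omega)⟩
  -- heights
  let f : E → I → ℕ := fun x i => sSup {n | ch i n x}
  have hbdd : ∀ x ∈ S, ∀ i, BddAbove {n | ch i n x} := by
    intro x hx i
    exact ⟨k, fun n hn => chain_le i x hx n hn⟩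
  have hf_mem : ∀ x ∈ S, ∀ i, ch i (f x i) x := by
    intro x hx i
    exact Nat.sSup_mem ⟨0, ch0 i x⟩ (hbdd x hx i)
  have hf_le : ∀ x ∈ S, ∀ i, f x i ≤ k := by
    intro x hx i
    exact csSup_le ⟨0, ch0 i x⟩ (fun n hn => chain_le i x hx n hn)
  have step : ∀ i x y, x ∈ S → y ∈ S → r i x y → f x i < f y i := by
    intro i x y hx hy hr
    have hch : ch i (f x i + 1) y := by
      obtain ⟨c, hcn, hcS, hcr⟩ := hf_mem x hx i
      refine ⟨fun j => if j ≤ f x i then c j else y, by simp, ?_, ?_⟩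
      · intro j hj
        rcases Nat.lt_or_ge j (f x i) with h | h
        · simp only [if_pos h.le]
          exact hcS j h
        · have : j = f x i := by omega
          subst this
          simp only [if_pos le_rfl, hcn]
          exact hx
      · intro j hj
        rcases Nat.lt_or_ge j (f x i) with h | h
        · simp only [if_pos h.le, if_pos (Nat.succ_le_of_lt h)]
          exact hcr j h
        · have : j = f x i := by omega
          subst this
          simp only [if_pos le_rfl, if_neg (by omega : ¬ f x i + 1 ≤ f x i), hcn]
          exact hr
    have : f x i + 1 ≤ f y i := le_csSup (hbdd y hy i) hch
    omega
  -- injectivity of f on S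
  have hinj : Set.InjOn f S := by
    intro x hx y hy hxy
    by_contra hne
    have hmem : y - x ∈ (⋃ i, P i ∪ (-(P i))) := by rw [hcover]; trivial
    obtain ⟨i, hi⟩ := Set.mem_iUnion.1 hmem
    have hyx : y - x ≠ 0 := sub_ne_zero.2 (Ne.symm hne)
    rcases hi with h | h
    · have := step i x y hx hy ⟨h, hyx⟩
      rw [hxy] at this
      omega
    · have h' : x - y ∈ P i := by rwa [Set.mem_neg, neg_sub] at h
      have := step i y x hy hx ⟨h', sub_ne_zero.2 hne⟩
      rw [hxy] at this
      omega
  -- conclude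
  let g : E → (I → Fin (k+1)) := fun x i => ⟨min (f x i) k, by omega⟩
  have hginj : Set.InjOn g S := by
    intro x hx y hy hxy
    apply hinj hx hy
    funext i
    have h1 := hf_le x hx i
    have h2 := hf_le y hy i
    have h3 : min (f x i) k = min (f y i) k := congrArg Fin.val (congrFun hxy i)
    omega
  calc S.encard = (g '' S).encard := (hginj.encard_image).symm
    _ ≤ (Set.univ : Set (I → Fin (k+1))).encard := Set.encard_mono (Set.subset_univ _)
    _ = ((k + 1) ^ Fintype.card I : ℕ) := by
        rw [Set.encard_univ]
        rw [ENat.card_eq_coe_fintype_card]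
        norm_cast
        rw [Fintype.card_fun, Fintype.card_fin]
end
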